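/- arXiv:0811.1265 — 3 statements merged into one kernel-verified Lean document; each statement's English description precedes it below -/
import Mathlib

section
/- Let H₁ be an m×m complex Hadamard matrix, H₂ an n×n complex Hadamard matrix, and λ : {1,…,m} × {1,…,n} → ℂ a function with |λ(i,l)| = 1 for all i,l. Then the twisted tensor product H with entries H_{(i,j),(k,l)} = (H₁)_{ik}(H₂)_{jl}λ(i,l) is an (mn)×(mn) complex Hadamard matrix. -/
/-!
The twisted tensor product factors as `(1 ⊗ H₂) * diagonal λ * (H₁ ⊗ 1)`, a product of three
unitary matrices, so it is unitary; since `|λ| = 1`, its entries have modulus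
`|(H₁)ᵢₖ| |(H₂)ⱼₗ| = 1 / √(mn)`.
-/

open scoped Kronecker

namespace Matrix

variable {ι ι' κ κ' R : Type*}

def twistedKronecker [Mul R] (A : Matrix ι ι' R) (B : Matrix κ κ' R) (lam : ι → κ' → R) :
    Matrix (ι × κ) (ι' × κ') R :=
  of fun p q => A p.1 q.1 * B p.2 q.2 * lam p.1 q.2

theorem twistedKronecker_eq_mul [CommSemiring R] [Fintype ι] [DecidableEq ι] [Fintype κ']
    [DecidableEq κ'] (A : Matrix ι ι' R) (B : Matrix κ κ' R) (lam : ι → κ' → R) :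
    twistedKronecker A B lam =
      (1 : Matrix ι ι R) ⊗ₖ B * diagonal (fun p : ι × κ' => lam p.1 p.2) *
        A ⊗ₖ (1 : Matrix κ' κ' R) := by
  ext ⟨i, j⟩ ⟨k, l⟩
  rw [mul_apply]
  simp [twistedKronecker, mul_diagonal, one_apply, Fintype.sum_prod_type]
  ring

theorem diagonal_mem_unitary [Fintype ι] [DecidableEq ι] [Semiring R] [StarRing R] {d : ι → R}
    (hd : ∀ i, d i ∈ unitary R) : diagonal d ∈ unitary (Matrix ι ι R) := by
  simp only [Unitary.mem_iff, star_eq_conjTranspose, diagonal_conjTranspose,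
    diagonal_mul_diagonal, Pi.star_apply]
  exact ⟨by simp [fun i => (hd i).1], by simp [fun i => (hd i).2]⟩

theorem twistedKronecker_mem_unitaryGroup [CommRing R] [StarRing R] [Fintype ι] [DecidableEq ι]
    [Fintype κ] [DecidableEq κ] {A : Matrix ι ι R} {B : Matrix κ κ R} {lam : ι → κ → R}
    (hA : A ∈ unitaryGroup ι R) (hB : B ∈ unitaryGroup κ R) (hlam : ∀ i l, lam i l ∈ unitary R) :
    twistedKronecker A B lam ∈ unitaryGroup (ι × κ) R := by
  rw [twistedKronecker_eq_mul]
  have hB' : (1 : Matrix ι ι R) ⊗ₖ B ∈ unitary (Matrix (ι × κ) (ι × κ) R) :=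
    kronecker_mem_unitary (one_mem _) hB
  have hA' : A ⊗ₖ (1 : Matrix κ κ R) ∈ unitary (Matrix (ι × κ) (ι × κ) R) :=
    kronecker_mem_unitary hA (one_mem _)
  exact mul_mem (mul_mem hB' (diagonal_mem_unitary fun p => hlam p.1 p.2)) hA'

end Matrix

theorem RCLike.mem_unitary_of_norm_eq_one {𝕜 : Type*} [RCLike 𝕜] {z : 𝕜} (hz : ‖z‖ = 1) :
    z ∈ unitary 𝕜 := by
  rw [Unitary.mem_iff, RCLike.star_def, RCLike.conj_mul, RCLike.mul_conj, hz]
  simp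

/-- The twisted tensor product of two complex Hadamard matrices, with unimodular
twist `λ i l` depending on the first row index and second column index, is again a
complex Hadamard matrix. -/
theorem stmt_2 {m n : ℕ} (H₁ : Matrix (Fin m) (Fin m) ℂ) (H₂ : Matrix (Fin n) (Fin n) ℂ)
    (h₁u : H₁ ∈ Matrix.unitaryGroup (Fin m) ℂ)
    (h₁e : ∀ i k, ‖H₁ i k‖ = 1 / Real.sqrt m)
    (h₂u : H₂ ∈ Matrix.unitaryGroup (Fin n) ℂ)
    (h₂e : ∀ j l, ‖H₂ j l‖ = 1 / Real.sqrt n)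
    (lam : Fin m → Fin n → ℂ) (hlam : ∀ i l, ‖lam i l‖ = 1)
    (H : Matrix (Fin m × Fin n) (Fin m × Fin n) ℂ)
    (hH : ∀ p q, H p q = H₁ p.1 q.1 * H₂ p.2 q.2 * lam p.1 q.2) :
    H ∈ Matrix.unitaryGroup (Fin m × Fin n) ℂ ∧
      ∀ p q, ‖H p q‖ = 1 / Real.sqrt (m * n) := by
  obtain rfl : H = H₁.twistedKronecker H₂ lam := Matrix.ext hH
  refine ⟨Matrix.twistedKronecker_mem_unitaryGroup h₁u h₂u
    fun i l => RCLike.mem_unitary_of_norm_eq_one (hlam i l), fun p q => ?_⟩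
  rw [hH, norm_mul, norm_mul, h₁e, h₂e, hlam, mul_one, Real.sqrt_mul m.cast_nonneg,
    one_div_mul_one_div]
end

section
/- Let H and K be finite groups and G a group generated by subgroups isomorphic to H and K together with an abelian normal subgroup N contained in G, such that N contains the commutator subgroup of G and G/N ≅ H ⊕ K via a map restricting to the identity on H and K. Then every element of G can be written uniquely as hkn with h ∈ H, k ∈ K, n ∈ N. -/
/-!
Composing `G → G ⧸ N` with `φ` sends `h k n` to `(h, k)`, so `h` and `k` are read off from the
image of `g`, and then `n = (h k)⁻¹ g`. Existence holds because `φ` is injective: `g` and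
`h k` have the same image, hence differ by an element of `N`.
-/

namespace Subgroup

variable {G : Type*} [Group G] {H K N : Subgroup G} [N.Normal] (φ : G ⧸ N ≃* H × K)

theorem quotientEquivProd_mk_mul_mul
    (hφH : ∀ h : H, φ ((h : G) : G ⧸ N) = (h, 1))
    (hφK : ∀ k : K, φ ((k : G) : G ⧸ N) = (1, k)) (h : H) (k : K) (n : N) :
    φ (((h : G) * k * n : G) : G ⧸ N) = (h, k) := by
  rw [QuotientGroup.mk_mul, (QuotientGroup.eq_one_iff _).2 n.2, mul_one, QuotientGroup.mk_mul,
    map_mul, hφH, hφK]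
  simp

theorem mul_mul_injective_of_quotientEquivProd
    (hφH : ∀ h : H, φ ((h : G) : G ⧸ N) = (h, 1))
    (hφK : ∀ k : K, φ ((k : G) : G ⧸ N) = (1, k)) :
    Function.Injective fun t : H × K × N => (t.1 : G) * t.2.1 * t.2.2 := by
  rintro ⟨h, k, n⟩ ⟨h', k', n'⟩ heq
  have hk : (h, k) = (h', k') := by
    rw [← quotientEquivProd_mk_mul_mul φ hφH hφK, ← quotientEquivProd_mk_mul_mul φ hφH hφK]
    exact congrArg _ (congrArg _ heq)
  obtain ⟨rfl, rfl⟩ := Prod.mk.inj hk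
  simpa using heq

theorem exists_eq_mul_mul_of_quotientEquivProd
    (hφH : ∀ h : H, φ ((h : G) : G ⧸ N) = (h, 1))
    (hφK : ∀ k : K, φ ((k : G) : G ⧸ N) = (1, k)) (g : G) :
    ∃ t : H × K × N, g = (t.1 : G) * t.2.1 * t.2.2 := by
  set p := φ (g : G ⧸ N)
  have hmem : ((p.1 : G) * p.2)⁻¹ * g ∈ N := by
    rw [← QuotientGroup.eq]
    apply φ.injective
    rw [QuotientGroup.mk_mul, map_mul, hφH, hφK]
    simp [p]
  exact ⟨(p.1, p.2, ⟨_, hmem⟩), by group⟩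

end Subgroup

theorem stmt_9_general {G : Type*} [Group G] (H K N : Subgroup G) [N.Normal]
    (φ : (G ⧸ N) ≃* H × K)
    (hφH : ∀ h : H, φ ((h : G) : G ⧸ N) = (h, 1))
    (hφK : ∀ k : K, φ ((k : G) : G ⧸ N) = (1, k)) :
    ∀ g : G, ∃! t : H × K × N, g = (t.1 : G) * (t.2.1 : G) * (t.2.2 : G) := fun g =>
  have ⟨t, ht⟩ := Subgroup.exists_eq_mul_mul_of_quotientEquivProd φ hφH hφK g
  ⟨t, ht, fun _ hs => Subgroup.mul_mul_injective_of_quotientEquivProd φ hφH hφK (hs.symm.trans ht)⟩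

/-- If `G` is generated by finite subgroups `H`, `K` and an abelian normal subgroup
`N` containing the commutator subgroup, with `G/N ≅ H ⊕ K` restricting to the
identity on `H` and `K`, then every element of `G` factors uniquely as `h k n`. -/
theorem stmt_9 {G : Type*} [Group G] (H K N : Subgroup G) [N.Normal]
    [Finite H] [Finite K]
    (hcomm : commutator G ≤ N)
    (habel : ∀ a b : N, a * b = b * a)
    (hgen : H ⊔ K ⊔ N = ⊤)
    (φ : (G ⧸ N) ≃* H × K)
    (hφH : ∀ h : H, φ ((h : G) : G ⧸ N) = (h, 1))
    (hφK : ∀ k : K, φ ((k : G) : G ⧸ N) = (1, k)) :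
    ∀ g : G, ∃! t : H × K × N, g = (t.1 : G) * (t.2.1 : G) * (t.2.2 : G) :=
  stmt_9_general H K N φ hφH hφK
end

section
/- Let H = K = ℤ/2 ⊕ ℤ/2 and consider the subgroup N of (ℤ/2)^9 = maps from (H∖{1}) × (K∖{1}) to ℤ/2 generated by the nine specific elements b(hkhk) arising from the twist T = (1,...,1,-1) ∈ {±1}^{16} (i.e., for each pair (h,k) of nontrivial elements, b(hkhk) ∈ {±1}^{H×K} is given by b(hkhk)(h',k') = T(h',k')·T(hh',k')·T(h',kk')·T(hh',kk'), viewed modulo functions of the form f(h')g(k')). Then N ≅ (ℤ/2)^4, generated by the elements corresponding to (w,y), (w,z), (x,y), (x,z) where H = {1,w,x,wx}, K = {1,y,z,yz}. -/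
/-!
`b13 h k` is the indicator of the rectangle `{wx, wx + h} × {yz, yz + k}`. Second differences
over rectangles vanish on row and column functions, and a function whose second differences over
all rectangles `{a, 0} × {b, 0}` vanish is a row plus a column function. The second differences
over the four rectangles `{wx, h} × {yz, k}`, `(h, k) ∈ {w, x} × {y, z}`, take `b13 h' k'` to the
`(h', k')`-th unit vector, so they give a left inverse, on the quotient, of
`c ↦ ∑ cᵢ • b13 hᵢ kᵢ`; and a finite computation shows that every `b13 h k` agrees modulo row and
column functions with the combination whose coefficients are its four coordinates. Hence `N` is
the image of an injective map from `(ℤ/2)⁴`.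
-/

/-- The twist of the Hadamard 16-7 example: `T(h,k) = -1` (written additively as `1`
in `ℤ/2`) exactly at `(wx, yz) = ((1,1),(1,1))`. -/
def T13 : (ZMod 2 × ZMod 2) × (ZMod 2 × ZMod 2) → ZMod 2 :=
  fun p => if p = ((1, 1), (1, 1)) then 1 else 0

/-- The commutator generator `b(hkhk)` as a `±1`-valued (additively, `ℤ/2`-valued)
function on `H × K`. -/
def b13 (h k : ZMod 2 × ZMod 2) : (ZMod 2 × ZMod 2) × (ZMod 2 × ZMod 2) → ZMod 2 :=
  fun p => T13 (p.1, p.2) + T13 (h + p.1, p.2) + T13 (p.1, k + p.2) + T13 (h + p.1, k + p.2)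

/-- The subgroup of functions of the form `(h,k) ↦ f(h) + g(k)` (row and column
multiplications), modulo which elements are identified. -/
def W13 : AddSubgroup ((ZMod 2 × ZMod 2) × (ZMod 2 × ZMod 2) → ZMod 2) :=
  AddSubgroup.closure
    {v | ∃ f g : ZMod 2 × ZMod 2 → ZMod 2, v = fun p => f p.1 + g p.2}

theorem Submodule.toAddSubgroup_span_zmod {n : ℕ} {M : Type*} [AddCommGroup M]
    [Module (ZMod n) M] (s : Set M) :
    (Submodule.span (ZMod n) s).toAddSubgroup = AddSubgroup.closure s :=
  le_antisymm
    (show Submodule.span (ZMod n) s ≤ AddSubgroup.toZModSubmodule n (AddSubgroup.closure s) from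
      Submodule.span_le.2 AddSubgroup.subset_closure)
    (AddSubgroup.closure_le _ |>.2 Submodule.subset_span)

section RowCol

variable {α β G : Type*} [AddCommGroup G]

variable (α β G) in
def rowColSubgroup : AddSubgroup (α × β → G) :=
  AddSubgroup.closure {v | ∃ f g : _ → G, v = fun p => f p.1 + g p.2}

def rectDiff (a a' : α) (b b' : β) : (α × β → G) →+ G where
  toFun v := v (a, b) - v (a', b) - v (a, b') + v (a', b')
  map_zero' := by simp
  map_add' v w := by simp only [Pi.add_apply]; abel

theorem rowColSubgroup_le_ker_rectDiff (a a' : α) (b b' : β) :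
    rowColSubgroup α β G ≤ (rectDiff a a' b b').ker := by
  rw [rowColSubgroup, AddSubgroup.closure_le]
  rintro _ ⟨f, g, rfl⟩
  simp only [SetLike.mem_coe, AddMonoidHom.mem_ker, rectDiff, AddMonoidHom.coe_mk,
    ZeroHom.coe_mk]
  abel

theorem mem_rowColSubgroup_of_rectDiff_eq_zero {v : α × β → G} (a₀ : α) (b₀ : β)
    (hv : ∀ a b, rectDiff a a₀ b b₀ v = 0) : v ∈ rowColSubgroup α β G := by
  refine AddSubgroup.subset_closure ⟨fun a => v (a, b₀), fun b => v (a₀, b) - v (a₀, b₀), ?_⟩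
  funext ⟨a, b⟩
  have hab := hv a b
  simp only [rectDiff, AddMonoidHom.coe_mk, ZeroHom.coe_mk] at hab
  show v (a, b) = v (a, b₀) + (v (a₀, b) - v (a₀, b₀))
  rw [← sub_eq_zero, ← hab]
  abel

end RowCol

abbrev HK := (ZMod 2 × ZMod 2) × (ZMod 2 × ZMod 2)

-- The pairs `(w,y), (w,z), (x,y), (x,z)`.
def basicPair : Fin 4 → HK :=
  ![((1, 0), (1, 0)), ((1, 0), (0, 1)), ((0, 1), (1, 0)), ((0, 1), (0, 1))]

def basicGen (i : Fin 4) : HK → ZMod 2 := b13 (basicPair i).1 (basicPair i).2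

-- The rectangle `{wx, h} × {yz, k}` meets the support of `b13 h' k'` in an odd number of points
-- exactly when `(h', k') = (h, k)`.
def rectCoord : (HK → ZMod 2) →+ (Fin 4 → ZMod 2) :=
  AddMonoidHom.pi fun i => rectDiff (1, 1) (basicPair i).1 (1, 1) (basicPair i).2

theorem W13_le_ker_rectCoord : W13 ≤ rectCoord.ker := fun _ hv => by
  ext i
  exact rowColSubgroup_le_ker_rectDiff _ _ _ _ hv

theorem rectCoord_linearCombination (c : Fin 4 → ZMod 2) :
    rectCoord (Fintype.linearCombination (ZMod 2) basicGen c) = c := by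
  revert c; decide

theorem b13_sub_linearCombination_mem (h k : ZMod 2 × ZMod 2) :
    b13 h k - Fintype.linearCombination (ZMod 2) basicGen (rectCoord (b13 h k)) ∈ W13 := by
  refine mem_rowColSubgroup_of_rectDiff_eq_zero 0 0 ?_
  revert h k; decide

def basicCombMod : (Fin 4 → ZMod 2) →+ (HK → ZMod 2) ⧸ W13 :=
  (QuotientAddGroup.mk' W13).comp (Fintype.linearCombination (ZMod 2) basicGen).toAddMonoidHom

theorem basicCombMod_injective : Function.Injective basicCombMod :=
  Function.LeftInverse.injective (g := QuotientAddGroup.lift W13 rectCoord W13_le_ker_rectCoord)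
    rectCoord_linearCombination

theorem mk_b13_eq_basicCombMod (h k : ZMod 2 × ZMod 2) :
    QuotientAddGroup.mk' W13 (b13 h k) = basicCombMod (rectCoord (b13 h k)) :=
  QuotientAddGroup.eq_iff_sub_mem.2 (b13_sub_linearCombination_mem h k)

theorem closure_mk_basicGen_eq_range :
    AddSubgroup.closure (Set.range fun i => QuotientAddGroup.mk' W13 (basicGen i)) =
      basicCombMod.range := by
  rw [Set.range_comp' (QuotientAddGroup.mk' W13), ← AddMonoidHom.map_closure,
    ← Submodule.toAddSubgroup_span_zmod (n := 2), ← Fintype.range_linearCombination,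
    basicCombMod, AddMonoidHom.range_comp]
  rfl

theorem range_mk_basicGen :
    (Set.range fun i => QuotientAddGroup.mk' W13 (basicGen i)) =
      {QuotientAddGroup.mk' W13 (b13 (1, 0) (1, 0)), QuotientAddGroup.mk' W13 (b13 (1, 0) (0, 1)),
        QuotientAddGroup.mk' W13 (b13 (0, 1) (1, 0)),
        QuotientAddGroup.mk' W13 (b13 (0, 1) (0, 1))} := by
  ext q
  simp [Fin.exists_fin_succ, basicGen, basicPair, eq_comm]

/-- In the Hadamard 16-7 example, the subgroup `N` generated by the nine elements
`b(hkhk)` (for nontrivial `h ∈ H`, `k ∈ K`), taken modulo row/column functions, is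
`(ℤ/2)⁴`, generated by the elements corresponding to `(w,y), (w,z), (x,y), (x,z)`
where `w = (1,0)`, `x = (0,1)`, `y = (1,0)`, `z = (0,1)`. -/
theorem stmt_13
    (N : AddSubgroup (((ZMod 2 × ZMod 2) × (ZMod 2 × ZMod 2) → ZMod 2) ⧸ W13))
    (hN : N = AddSubgroup.closure
      {q | ∃ h k : ZMod 2 × ZMod 2, h ≠ 0 ∧ k ≠ 0 ∧ q = QuotientAddGroup.mk' W13 (b13 h k)}) :
    N = AddSubgroup.closure
        {QuotientAddGroup.mk' W13 (b13 (1, 0) (1, 0)),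
         QuotientAddGroup.mk' W13 (b13 (1, 0) (0, 1)),
         QuotientAddGroup.mk' W13 (b13 (0, 1) (1, 0)),
         QuotientAddGroup.mk' W13 (b13 (0, 1) (0, 1))} ∧
      Nonempty (N ≃+ (Fin 4 → ZMod 2)) := by
  have hbasic := range_mk_basicGen ▸ closure_mk_basicGen_eq_range
  have hN_range : N = basicCombMod.range := by
    refine hN.trans (le_antisymm ?_ ?_)
    · rw [AddSubgroup.closure_le]
      rintro _ ⟨h, k, -, -, rfl⟩
      exact ⟨_, (mk_b13_eq_basicCombMod h k).symm⟩
    · rw [← hbasic]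
      refine AddSubgroup.closure_mono ?_
      rintro _ (rfl | rfl | rfl | rfl) <;> exact ⟨_, _, by decide, by decide, rfl⟩
  exact ⟨hN_range.trans hbasic.symm, ⟨(AddEquiv.addSubgroupCongr hN_range).trans
    (AddMonoidHom.ofInjective basicCombMod_injective).symm⟩⟩
end
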